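/- For the belt buckle graph, the entropy-one condition det(A_{−l} − Id) = 0 for the 6×6 weighted adjacency matrix is equivalent to e^{−z} = (1 − e^{−x−y})/(2e^{−x−y} + e^{−x} + e^{−y}), for x, y, z > 0. -/

import Mathlib

/-!
Subtracting the identity puts `-1` on the diagonal, and a cofactor expansion factors the determinant
of `A_{-l} - 1` as `(1 - ab - (a + b + 2ab) c) (1 - ab - bc - ca + 2abc)` with `a, b, c = e^{-x}, e^{-y}, e^{-z}`.
The second factor is positive for weights in `(0, 1)`, so the determinant vanishes exactly when the
first one does, which is the stated formula for `e^{-z}`.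
-/

open Real

theorem Matrix.det_beltBuckle_sub_one {R : Type*} [CommRing R] (a b c : R) :
    Matrix.det
      (!![0, 0, 0, 0, a, a;
          0, 0, 0, b, 0, b;
          0, 0, 0, c, c, 0;
          0, a, a, 0, 0, 0;
          b, 0, b, 0, 0, 0;
          c, c, 0, 0, 0, 0] - (1 : Matrix (Fin 6) (Fin 6) R)) =
      (1 - a * b - (a + b + 2 * a * b) * c) * (1 - a * b - b * c - c * a + 2 * a * b * c) := by
  have hsub : (!![0, 0, 0, 0, a, a;
          0, 0, 0, b, 0, b;
          0, 0, 0, c, c, 0;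
          0, a, a, 0, 0, 0;
          b, 0, b, 0, 0, 0;
          c, c, 0, 0, 0, 0] - (1 : Matrix (Fin 6) (Fin 6) R)) =
      !![-1, 0, 0, 0, a, a;
          0, -1, 0, b, 0, b;
          0, 0, -1, c, c, 0;
          0, a, a, -1, 0, 0;
          b, 0, b, 0, -1, 0;
          c, c, 0, 0, 0, -1] := by
    ext i j
    fin_cases i <;> fin_cases j <;> simp
  rw [hsub]
  simp [Matrix.det_succ_row_zero, Fin.sum_univ_succ, Fin.succAbove]
  ring

/-- The left side is the convex combination `(1 - c) (1 - ab) + c (1 - a) (1 - b)`. -/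
theorem one_sub_mul_sub_mul_sub_mul_add_two_mul_pos {a b c : ℝ} (ha₀ : 0 ≤ a) (ha₁ : a < 1)
    (hb₁ : b < 1) (hc₀ : 0 ≤ c) (hc₁ : c ≤ 1) :
    0 < 1 - a * b - b * c - c * a + 2 * a * b * c := by
  have hab : 0 < 1 - a * b := by nlinarith
  have hab' : 0 < (1 - a) * (1 - b) := mul_pos (sub_pos.2 ha₁) (sub_pos.2 hb₁)
  have hconvex : 1 - a * b - b * c - c * a + 2 * a * b * c =
      (1 - c) * (1 - a * b) + c * ((1 - a) * (1 - b)) := by ring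
  rw [hconvex]
  nlinarith [mul_nonneg hc₀ hab'.le, mul_nonneg (sub_nonneg.2 hc₁) hab.le, mul_pos hab hab']

theorem beltbuckle_entropy_one_condition (x y z : ℝ) (hx : 0 < x) (hy : 0 < y) (hz : 0 < z) :
    Matrix.det
      (!![0, 0, 0, 0, exp (-x), exp (-x);
          0, 0, 0, exp (-y), 0, exp (-y);
          0, 0, 0, exp (-z), exp (-z), 0;
          0, exp (-x), exp (-x), 0, 0, 0;
          exp (-y), 0, exp (-y), 0, 0, 0;
          exp (-z), exp (-z), 0, 0, 0, 0] - (1 : Matrix (Fin 6) (Fin 6) ℝ)) = 0 ↔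
      exp (-z) = (1 - exp (-x - y)) / (2 * exp (-x - y) + exp (-x) + exp (-y)) := by
  have hxy : exp (-x - y) = exp (-x) * exp (-y) := by rw [sub_eq_add_neg, exp_add]
  have hden : 0 < 2 * (exp (-x) * exp (-y)) + exp (-x) + exp (-y) := by positivity
  have hfactor_pos := one_sub_mul_sub_mul_sub_mul_add_two_mul_pos (exp_pos (-x)).le
    (exp_lt_one_iff.2 (neg_neg_of_pos hx)) (exp_lt_one_iff.2 (neg_neg_of_pos hy))
    (exp_pos (-z)).le (exp_le_one_iff.2 (neg_nonpos.2 hz.le))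
  rw [Matrix.det_beltBuckle_sub_one, mul_eq_zero, or_iff_left hfactor_pos.ne', hxy,
    eq_div_iff hden.ne']
  constructor <;> intro h <;> linarith
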